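/- Let d₁, d₂, d₃ > 0 satisfy the strict triangle inequalities, and let θ_α = arccos((d_β² + d_γ² − d_α²)/(2 d_β d_γ)) for {α,β,γ} = {1,2,3}. Let M be the symmetric 3×3 real matrix with diagonal entries M_{αα} = 1/d_α² and off-diagonal entries M_{αβ} = −cos θ_γ/(d_α d_β) for {α,β,γ} = {1,2,3}. Then M is positive semidefinite, and for x ∈ ℝ³ one has xᵀ M x = 0 if and only if x is a scalar multiple of (d₁², d₂², d₃²). -/

import Mathlib

open Matrix

/-- The angle opposite the side `d_α`, by the law of cosines
(for distinct `α, β, γ`, `θ_α = arccos((d_β² + d_γ² − d_α²)/(2 d_β d_γ))`). -/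
noncomputable def triAngle (d : Fin 3 → ℝ) (α : Fin 3) : ℝ :=
  Real.arccos ((d (α + 1) ^ 2 + d (α + 2) ^ 2 - d α ^ 2) /
    (2 * d (α + 1) * d (α + 2)))

/-- The symmetric matrix with `M_{αα} = 1/d_α²` and
`M_{αβ} = −cos θ_γ/(d_α d_β)` for `{α,β,γ} = {1,2,3}`; note that for distinct
`α, β : Fin 3` the third index is `γ = −(α + β)`. -/
noncomputable def hessMatrix (d : Fin 3 → ℝ) : Matrix (Fin 3) (Fin 3) ℝ :=
  fun α β =>
    if α = β then 1 / d α ^ 2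
    else -Real.cos (triAngle d (-(α + β))) / (d α * d β)

/-!
Write `u_α = d_α²` and let `e_α` be the edge vectors of the triangle, oriented so that
`e₁ + e₂ + e₃ = 0`; then `|e_α|² = u_α` and `e_α · e_β = (u_γ - u_α - u_β) / 2 = -d_α d_β cos θ_γ`.
Hence `M_{αβ} = (e_α · e_β) / (u_α u_β)`, i.e. `xᵀ M x = |∑ y_α e_α|²` with `y_α = x_α / u_α`.
Since the `e_α` sum to zero, this is the binary quadratic form
`u₁ s² + (u₃ - u₁ - u₂) s t + u₂ t²` in `s = y₁ - y₃`, `t = y₂ - y₃`,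
whose discriminant is `-16 Area²` by Heron's formula. So the form is positive semidefinite
and vanishes exactly when `y` is constant, i.e. when `x` is a multiple of `u`.
-/

theorem four_mul_mul_quadForm {R : Type*} [CommRing R] (a b c s t : R) :
    4 * a * (a * s ^ 2 + b * s * t + c * t ^ 2) =
      (2 * a * s + b * t) ^ 2 - discrim a b c * t ^ 2 := by
  rw [discrim]; ring

section QuadForm

variable {K : Type*} [Field K] [LinearOrder K] [IsStrictOrderedRing K] {a b c : K}

theorem quadForm_nonneg_of_discrim_neg (ha : 0 < a) (h : discrim a b c < 0) (s t : K) :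
    0 ≤ a * s ^ 2 + b * s * t + c * t ^ 2 := by
  refine nonneg_of_mul_nonneg_right ?_ (by positivity : (0 : K) < 4 * a)
  rw [four_mul_mul_quadForm]
  nlinarith [sq_nonneg (2 * a * s + b * t), sq_nonneg t]

theorem quadForm_eq_zero_iff_of_discrim_neg (ha : 0 < a) (h : discrim a b c < 0) (s t : K) :
    a * s ^ 2 + b * s * t + c * t ^ 2 = 0 ↔ s = 0 ∧ t = 0 := by
  refine ⟨fun hst => ?_, fun ⟨hs, ht⟩ => by simp [hs, ht]⟩
  have hsum : (2 * a * s + b * t) ^ 2 + (-discrim a b c) * t ^ 2 = 0 := by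
    rw [neg_mul, ← sub_eq_add_neg, ← four_mul_mul_quadForm, hst, mul_zero]
  obtain ⟨hsq, hdt⟩ := (add_eq_zero_iff_of_nonneg (sq_nonneg _)
    (mul_nonneg (neg_nonneg.2 h.le) (sq_nonneg t))).1 hsum
  obtain rfl : t = 0 :=
    pow_eq_zero_iff two_ne_zero |>.1 <| (mul_eq_zero.1 hdt).resolve_left (neg_ne_zero.2 h.ne)
  refine ⟨?_, rfl⟩
  simpa [ha.ne'] using hsq

end QuadForm

theorem exists_eq_smul_iff_div_eq {ι K : Type*} [Field K] {u x : ι → K}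
    (hu : ∀ i, u i ≠ 0) (j : ι) :
    (∃ c : K, x = c • u) ↔ ∀ i, x i / u i = x j / u j := by
  constructor
  · rintro ⟨c, rfl⟩ i
    simp [mul_div_cancel_right₀ _ (hu _)]
  · refine fun h => ⟨x j / u j, funext fun i => ?_⟩
    rw [Pi.smul_apply, smul_eq_mul, ← h i, div_mul_cancel₀ _ (hu i)]

theorem discrim_neg_of_triangle {a b c : ℝ} (ha : a < b + c) (hb : b < c + a) (hc : c < a + b) :
    discrim (a ^ 2) (c ^ 2 - a ^ 2 - b ^ 2) (b ^ 2) < 0 := by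
  have heron : discrim (a ^ 2) (c ^ 2 - a ^ 2 - b ^ 2) (b ^ 2) =
      -((a + b + c) * (b + c - a) * (c + a - b) * (a + b - c)) := by
    rw [discrim]; ring
  have : 0 < a + b + c := by linarith
  have : 0 < b + c - a := by linarith
  have : 0 < c + a - b := by linarith
  have : 0 < a + b - c := by linarith
  rw [heron, neg_neg_iff_pos]
  positivity

theorem lawOfCosines_mem_Icc {a b c : ℝ} (hb : 0 < b) (hc : 0 < c) (ha : a ≤ b + c)
    (hb' : b ≤ c + a) (hc' : c ≤ a + b) :
    (b ^ 2 + c ^ 2 - a ^ 2) / (2 * b * c) ∈ Set.Icc (-1) 1 := by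
  rw [Set.mem_Icc, le_div_iff₀ (by positivity), div_le_one (by positivity)]
  constructor <;> nlinarith [mul_nonneg (sub_nonneg.2 hb') (sub_nonneg.2 hc')]

section Triangle

variable {d : Fin 3 → ℝ}

theorem cos_triAngle (hpos : ∀ α, 0 < d α) (htri : ∀ α, d α < d (α + 1) + d (α + 2))
    (α : Fin 3) :
    Real.cos (triAngle d α) =
      (d (α + 1) ^ 2 + d (α + 2) ^ 2 - d α ^ 2) / (2 * d (α + 1) * d (α + 2)) := by
  have h₁ := htri (α + 1)
  have h₂ := htri (α + 2)
  simp only [add_assoc, Fin.reduceAdd, add_zero] at h₁ h₂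
  obtain ⟨hlo, hhi⟩ := lawOfCosines_mem_Icc (hpos _) (hpos _) (htri α).le h₁.le h₂.le
  exact Real.cos_arccos hlo hhi

theorem hessMatrix_isHermitian (d : Fin 3 → ℝ) : (hessMatrix d).IsHermitian := by
  rw [isHermitian_iff_isSymm]
  ext α β
  simp only [transpose_apply, hessMatrix]
  split_ifs with h h' h'
  · rw [h]
  · exact absurd h.symm h'
  · exact absurd h'.symm h
  · rw [add_comm, mul_comm]

theorem dotProduct_hessMatrix_mulVec (hpos : ∀ α, 0 < d α)
    (htri : ∀ α, d α < d (α + 1) + d (α + 2)) (x : Fin 3 → ℝ) :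
    x ⬝ᵥ hessMatrix d *ᵥ x =
      d 0 ^ 2 * (x 0 / d 0 ^ 2 - x 2 / d 2 ^ 2) ^ 2
      + (d 2 ^ 2 - d 0 ^ 2 - d 1 ^ 2) * (x 0 / d 0 ^ 2 - x 2 / d 2 ^ 2)
        * (x 1 / d 1 ^ 2 - x 2 / d 2 ^ 2)
      + d 1 ^ 2 * (x 1 / d 1 ^ 2 - x 2 / d 2 ^ 2) ^ 2 := by
  have hcos := cos_triAngle hpos htri
  have h₀ := (hpos 0).ne'
  have h₁ := (hpos 1).ne'
  have h₂ := (hpos 2).ne'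
  simp only [dotProduct, mulVec, hessMatrix, one_div, neg_add_rev, Fin.neg_def, hcos,
    Fin.isValue, ite_mul, Fin.sum_univ_three, Fin.coe_ofNat_eq_mod, Nat.zero_mod, tsub_zero,
    Nat.mod_self, Fin.zero_eta, zero_add, Nat.one_mod, Nat.add_one_sub_one, Nat.mod_succ,
    Fin.reduceFinMk, Nat.reduceSub, Fin.mk_one, ↓reduceIte, zero_ne_one, add_zero,
    Fin.reduceAdd, Fin.reduceEq, one_ne_zero]
  field_simp
  ring

end Triangle

/-- For a Euclidean triangle with side lengths `d₁, d₂, d₃`, the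
matrix `M` with `M_{αα} = 1/d_α²`, `M_{αβ} = −cos θ_γ/(d_α d_β)` is positive
semidefinite, and `xᵀ M x = 0` iff `x` is a scalar multiple of `(d₁², d₂², d₃²)`. -/
theorem hessMatrix_posSemidef_and_kernel (d : Fin 3 → ℝ)
    (hpos : ∀ α, 0 < d α)
    (htri : ∀ α, d α < d (α + 1) + d (α + 2)) :
    (hessMatrix d).PosSemidef ∧
    ∀ x : Fin 3 → ℝ,
      x ⬝ᵥ (hessMatrix d).mulVec x = 0 ↔ ∃ c : ℝ, x = c • fun α => d α ^ 2 := by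
  have h₀ := htri 0
  have h₁ := htri 1
  have h₂ := htri 2
  simp only [Fin.reduceAdd] at h₀ h₁ h₂
  have hdisc := discrim_neg_of_triangle h₀ h₁ h₂
  have hu₀ : 0 < d 0 ^ 2 := by have := hpos 0; positivity
  refine ⟨.of_dotProduct_mulVec_nonneg (hessMatrix_isHermitian d) fun x => ?_, fun x => ?_⟩
  · rw [star_trivial, dotProduct_hessMatrix_mulVec hpos htri]
    exact quadForm_nonneg_of_discrim_neg hu₀ hdisc _ _
  · rw [dotProduct_hessMatrix_mulVec hpos htri, quadForm_eq_zero_iff_of_discrim_neg hu₀ hdisc,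
      exists_eq_smul_iff_div_eq (fun α => (pow_pos (hpos α) 2).ne') 2, Fin.forall_fin_succ]
    simp [sub_eq_zero]
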